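/- Let a, δ, γ₀, ε be real numbers with ε ≠ 0. Set s := √(γ₀² + ε²), λ := √((aδ + γ₀)² + ε²), φ := λ + aδ + γ₀, and N := √(φ² + ε²). Define the real 2×2 matrices H₀ := !![γ₀, ε; ε, −γ₀], ρ := (1/(2s)) • !![s − γ₀, −ε; −ε, s + γ₀], and u := (1/N) • !![−ε, φ; φ, ε]. Let ρᴱ := uᵀ · ρ · u, let ρ_diag be the diagonal matrix with the same diagonal entries as ρᴱ, and let ρ_c := ρᴱ − ρ_diag be its off-diagonal part. Then −(1/2) · trace( ρ_c · (uᵀ·H₀·u) ) = a² δ² ε² / ( 2 s ((aδ + γ₀)² + ε²) ). -/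

import Mathlib

/-!
The pre-quench ground state is `ρ = (s - H₀) / (2s)`, a function of `H₀`, so in any orthonormal
basis its coherences are `-1/(2s)` times those of `H₀`; the coherent heat is therefore
`(uᵀH₀u)₀₁² / (2s)`. As `u` diagonalises `H₁ = H₀ + aδσ_z`, that entry is
`-aδ (uᵀσ_z u)₀₁ = aδε/λ`.
-/

open Matrix

theorem Matrix.IsSymm.transpose_mul_mul {n R : Type*} [Fintype n] [CommSemiring R]
    {A : Matrix n n R} (hA : A.IsSymm) (B : Matrix n n R) : (Bᵀ * A * B).IsSymm := by
  simp only [IsSymm, transpose_mul, transpose_transpose, hA.eq, Matrix.mul_assoc]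

namespace LandauZener

section CommRing

variable {R : Type*} [CommRing R]

theorem trace_offDiag_mul_fin_two (A B : Matrix (Fin 2) (Fin 2) R) :
    trace ((A - diagonal fun i => A i i) * B) = A 0 1 * B 1 0 + A 1 0 * B 0 1 := by
  simp [trace_fin_two, mul_apply, Fin.sum_univ_two]

theorem conj_smul_one_sub_apply_of_ne {n : Type*} [Fintype n] [DecidableEq n]
    {u : Matrix n n R} (hu : uᵀ * u = 1) (c s : R) (H : Matrix n n R) {i j : n} (hij : i ≠ j) :
    (uᵀ * (c • (s • 1 - H)) * u) i j = -c * (uᵀ * H * u) i j := by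
  rw [Matrix.mul_smul, Matrix.smul_mul, Matrix.mul_sub, Matrix.sub_mul, Matrix.mul_smul,
    Matrix.smul_mul, Matrix.mul_one, hu]
  simp [hij]

theorem trace_offDiag_conj_mul_conj {u H : Matrix (Fin 2) (Fin 2) R} (hu : uᵀ * u = 1)
    (hH : H.IsSymm) (c s : R) :
    trace ((uᵀ * (c • (s • 1 - H)) * u - diagonal fun i => (uᵀ * (c • (s • 1 - H)) * u) i i)
      * (uᵀ * H * u)) = -2 * c * (uᵀ * H * u) 0 1 ^ 2 := by
  rw [trace_offDiag_mul_fin_two, conj_smul_one_sub_apply_of_ne hu _ _ _ zero_ne_one,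
    conj_smul_one_sub_apply_of_ne hu _ _ _ one_ne_zero, (hH.transpose_mul_mul u).apply 0 1]
  ring

end CommRing

section Field

/- `(1 / N) • !![-ε, φ; φ, ε]` is orthogonal when `N² = φ² + ε²`, and its columns are
eigenvectors of `!![g, ε; ε, -g]` when `φ² - 2gφ - ε² = 0`. -/

variable {K : Type*} [Field K]

theorem eigvecs_transpose_mul_self {φ ε N : K} (hN : N ≠ 0) (hN2 : N ^ 2 = φ ^ 2 + ε ^ 2) :
    ((1 / N) • !![-ε, φ; φ, ε])ᵀ * ((1 / N) • !![-ε, φ; φ, ε]) = 1 := by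
  have hP : (!![-ε, φ; φ, ε])ᵀ * !![-ε, φ; φ, ε] = N ^ 2 • (1 : Matrix (Fin 2) (Fin 2) K) := by
    rw [hN2]
    ext i j
    fin_cases i <;> fin_cases j <;> simp [mul_apply, Fin.sum_univ_two, sq, add_comm, mul_comm]
  rw [transpose_smul, Matrix.smul_mul, Matrix.mul_smul, hP, smul_smul, smul_smul,
    show 1 / N * (1 / N) * N ^ 2 = 1 by field_simp, one_smul]

theorem eigvecs_conj_apply_zero_one (x y φ ε N : K) :
    (((1 / N) • !![-ε, φ; φ, ε])ᵀ * !![x, y; y, -x] * ((1 / N) • !![-ε, φ; φ, ε])) 0 1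
      = (y * (φ ^ 2 - ε ^ 2) - 2 * x * ε * φ) / N ^ 2 := by
  simp only [one_div, smul_of, smul_cons, smul_eq_mul, mul_neg, smul_empty, Fin.isValue, mul_apply,
    transpose_apply, of_apply, cons_val', cons_val_zero, cons_val_fin_one, Fin.sum_univ_two, neg_mul,
    cons_val_one]
  ring

end Field

end LandauZener

open LandauZener in
theorem landauZener_coherent_heat (a δ γ₀ ε : ℝ) (hε : ε ≠ 0) :
    let s : ℝ := Real.sqrt (γ₀ ^ 2 + ε ^ 2)
    let lam : ℝ := Real.sqrt ((a * δ + γ₀) ^ 2 + ε ^ 2)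
    let φ : ℝ := lam + a * δ + γ₀
    let N : ℝ := Real.sqrt (φ ^ 2 + ε ^ 2)
    let H₀ : Matrix (Fin 2) (Fin 2) ℝ := !![γ₀, ε; ε, -γ₀]
    let ρ : Matrix (Fin 2) (Fin 2) ℝ := (1 / (2 * s)) • !![s - γ₀, -ε; -ε, s + γ₀]
    let u : Matrix (Fin 2) (Fin 2) ℝ := (1 / N) • !![-ε, φ; φ, ε]
    let ρE : Matrix (Fin 2) (Fin 2) ℝ := uᵀ * ρ * u
    let ρdiag : Matrix (Fin 2) (Fin 2) ℝ := Matrix.diagonal (fun i => ρE i i)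
    let ρc : Matrix (Fin 2) (Fin 2) ℝ := ρE - ρdiag;
    -(1 / 2) * Matrix.trace (ρc * (uᵀ * H₀ * u))
      = a ^ 2 * δ ^ 2 * ε ^ 2 / (2 * s * ((a * δ + γ₀) ^ 2 + ε ^ 2)) := by
  intro s lam φ N H₀ ρ u ρE ρdiag ρc
  have hs : 0 < s := Real.sqrt_pos.mpr (by positivity)
  have hlam : 0 < lam := Real.sqrt_pos.mpr (by positivity)
  have hlam2 : lam ^ 2 = (a * δ + γ₀) ^ 2 + ε ^ 2 := Real.sq_sqrt (by positivity)
  have hφ_eig : φ ^ 2 - 2 * (a * δ + γ₀) * φ - ε ^ 2 = 0 := by linear_combination hlam2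
  have hN2 : N ^ 2 = φ ^ 2 + ε ^ 2 := Real.sq_sqrt (by positivity)
  have hu : uᵀ * u = 1 := eigvecs_transpose_mul_self (Real.sqrt_pos.mpr (by positivity)).ne' hN2
  have hρ : ρ = (1 / (2 * s)) • (s • 1 - H₀) := by
    ext i j
    fin_cases i <;> fin_cases j <;> simp [ρ, H₀]
  have hH₀ : H₀.IsSymm := by
    ext i j
    fin_cases i <;> fin_cases j <;> rfl
  have hM : (uᵀ * H₀ * u) 0 1 = a * δ * ε / lam := by
    rw [eigvecs_conj_apply_zero_one, hN2, div_eq_div_iff (by positivity) hlam.ne']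
    linear_combination ε * (lam + a * δ) * hφ_eig
  have hQ : trace (ρc * (uᵀ * H₀ * u)) = -2 * (1 / (2 * s)) * (uᵀ * H₀ * u) 0 1 ^ 2 := by
    simp only [ρc, ρdiag, ρE]
    rw [hρ]
    exact trace_offDiag_conj_mul_conj hu hH₀ _ _
  rw [hQ, hM, ← hlam2]
  field_simp
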